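/- If E‖X‖⁴ < ∞, then for independent X, X₁, X₂ with distribution F, the double centered distance satisfies E[d³(X₁,X) · d(X₂,X)] = 0. -/

import Mathlib

/-!
Integrate over `X₂` first: since `g` has mean `Δ`, the double centered distance is centered in
each argument, `∫ d(y, x) dF(y) = 0` for every `x`, so the inner integral of
`d³(x₁, x) · d(x₂, x)` already vanishes. The fourth moment makes the integrand integrable,
through the bound `|d(a, b)| ≤ c (‖a‖ + 1)(‖b‖ + 1)`.
-/

open MeasureTheory ProbabilityTheory

theorem ProbabilityTheory.iIndepFun.map_prodMk_prodMk_eq_prod_map_map_map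
    {Ω β : Type*} [MeasurableSpace Ω] {μ : Measure Ω} [IsProbabilityMeasure μ]
    [MeasurableSpace β] {X Y Z : Ω → β}
    (hX : Measurable X) (hY : Measurable Y) (hZ : Measurable Z) (h : iIndepFun ![X, Y, Z] μ) :
    μ.map (fun ω => ((X ω, Y ω), Z ω)) = ((μ.map X).prod (μ.map Y)).prod (μ.map Z) := by
  have hmeas : ∀ i, Measurable (![X, Y, Z] i) := by
    intro i; fin_cases i <;> simpa
  have hXY : IndepFun X Y μ := by simpa using h.indepFun (i := 0) (j := 1) (by decide)
  have hXYZ : IndepFun (fun ω => (X ω, Y ω)) Z μ := by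
    simpa using h.indepFun_prodMk hmeas 0 1 2 (by decide) (by decide)
  rw [(indepFun_iff_map_prod_eq_prod_map_map (hX.prodMk hY).aemeasurable hZ.aemeasurable).mp hXYZ,
    (indepFun_iff_map_prod_eq_prod_map_map hX.aemeasurable hY.aemeasurable).mp hXY]

section Moments

variable {E : Type*} [NormedAddCommGroup E] [MeasurableSpace E] [BorelSpace E]
  {F : Measure E} [IsFiniteMeasure F]

theorem integrable_norm_add_one_pow {n k : ℕ} (h : Integrable (fun x => ‖x‖ ^ n) F)
    (hk : k ≤ n) : Integrable (fun x : E => (‖x‖ + 1) ^ k) F := by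
  refine ((h.add (integrable_const 1)).const_mul (2 ^ (n - 1))).mono'
    (by fun_prop : Continuous _).aestronglyMeasurable (ae_of_all _ fun x => ?_)
  rw [Real.norm_of_nonneg (by positivity)]
  calc (‖x‖ + 1) ^ k ≤ (‖x‖ + 1) ^ n := pow_le_pow_right₀ (by simp) hk
    _ ≤ 2 ^ (n - 1) * (‖x‖ ^ n + 1) := by simpa using add_pow_le (norm_nonneg x) zero_le_one n

theorem integrable_norm_of_integrable_norm_pow {n : ℕ} (h : Integrable (fun x => ‖x‖ ^ n) F)
    (hn : 1 ≤ n) : Integrable (fun x : E => ‖x‖) F := by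
  simpa [Pi.sub_def] using (integrable_norm_add_one_pow h hn).sub (integrable_const 1)

theorem integrable_norm_sub_const (h : Integrable (fun x : E => ‖x‖) F) (x : E) :
    Integrable (fun y => ‖y - x‖) F :=
  (h.add (integrable_const ‖x‖)).mono' (by fun_prop : Continuous _).aestronglyMeasurable
    (ae_of_all _ fun y => by simpa using norm_sub_le y x)

end Moments

section DoubleCentered

variable {E : Type*} [NormedAddCommGroup E] [MeasurableSpace E] (F : Measure E)

-- The paper's `g`, `Δ` and `d`.
noncomputable def meanDist (x : E) : ℝ := ∫ y, ‖y - x‖ ∂F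

noncomputable def meanPairDist : ℝ := ∫ x, ∫ y, ‖x - y‖ ∂F ∂F

noncomputable def doubleCenteredDist (x₁ x₂ : E) : ℝ :=
  ‖x₁ - x₂‖ - meanDist F x₁ - meanDist F x₂ + meanPairDist F

variable {F}

theorem meanDist_nonneg (x : E) : 0 ≤ meanDist F x := integral_nonneg fun _ => norm_nonneg _

theorem meanPairDist_nonneg : 0 ≤ meanPairDist F :=
  integral_nonneg fun _ => integral_nonneg fun _ => norm_nonneg _

theorem integral_meanDist : ∫ x, meanDist F x ∂F = meanPairDist F :=
  integral_congr_ae (ae_of_all _ fun x => integral_congr_ae (ae_of_all _ fun y => norm_sub_rev y x))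

variable [BorelSpace E]

theorem meanDist_le [IsProbabilityMeasure F] (h1 : Integrable (fun x : E => ‖x‖) F) (x : E) :
    meanDist F x ≤ ∫ y, ‖y‖ ∂F + ‖x‖ := by
  calc meanDist F x ≤ ∫ y, (‖y‖ + ‖x‖) ∂F :=
        integral_mono (integrable_norm_sub_const h1 x) (h1.add (integrable_const ‖x‖))
          fun y => norm_sub_le y x
    _ = ∫ y, ‖y‖ ∂F + ‖x‖ := by simp [integral_add h1 (integrable_const ‖x‖)]

theorem abs_doubleCenteredDist_le [IsProbabilityMeasure F] (h1 : Integrable (fun x : E => ‖x‖) F)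
    (a b : E) : |doubleCenteredDist F a b| ≤ ‖a‖ + ‖b‖ + (2 * ∫ y, ‖y‖ ∂F + meanPairDist F) := by
  have hC : 0 ≤ ∫ y, ‖y‖ ∂F := integral_nonneg fun _ => norm_nonneg _
  unfold doubleCenteredDist
  rw [abs_le]
  constructor <;> linarith [meanDist_le h1 a, meanDist_le h1 b, meanDist_nonneg (F := F) a,
    meanDist_nonneg (F := F) b, meanPairDist_nonneg (F := F), norm_sub_le a b, norm_nonneg (a - b)]

variable [SecondCountableTopology E]

theorem measurable_meanDist [SFinite F] : Measurable (meanDist F) :=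
  ((continuous_snd.sub continuous_fst).norm.stronglyMeasurable.integral_prod_right'
    (ν := F)).measurable

theorem measurable_doubleCenteredDist [SFinite F] :
    Measurable (fun q : E × E => doubleCenteredDist F q.1 q.2) := by
  unfold doubleCenteredDist
  have := measurable_meanDist (F := F)
  fun_prop

theorem integrable_meanDist [IsProbabilityMeasure F] (h1 : Integrable (fun x : E => ‖x‖) F) :
    Integrable (meanDist F) F :=
  ((integrable_const _).add h1).mono' measurable_meanDist.aestronglyMeasurable
    (ae_of_all _ fun x => by
      rw [Real.norm_of_nonneg (meanDist_nonneg x)]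
      exact meanDist_le h1 x)

theorem integral_doubleCenteredDist_left [IsProbabilityMeasure F]
    (h1 : Integrable (fun x : E => ‖x‖) F) (x : E) : ∫ y, doubleCenteredDist F y x ∂F = 0 := by
  have hsplit : (fun y => doubleCenteredDist F y x)
      = fun y => (‖y - x‖ - meanDist F y) + (meanPairDist F - meanDist F x) := by
    funext y; unfold doubleCenteredDist; ring
  have hint : Integrable (fun y => ‖y - x‖ - meanDist F y) F :=
    (integrable_norm_sub_const h1 x).sub (integrable_meanDist h1)
  rw [hsplit, integral_add hint (integrable_const _),
    integral_sub (integrable_norm_sub_const h1 x) (integrable_meanDist h1), integral_meanDist]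
  simp [meanDist]

theorem integrable_doubleCenteredDist_pow_three_mul [IsProbabilityMeasure F]
    (h4 : Integrable (fun x : E => ‖x‖ ^ 4) F) :
    Integrable (fun z : (E × E) × E =>
      doubleCenteredDist F z.1.2 z.1.1 ^ 3 * doubleCenteredDist F z.2 z.1.1) ((F.prod F).prod F) := by
  have h1 := integrable_norm_of_integrable_norm_pow h4 (by norm_num)
  set K := 2 * ∫ y, ‖y‖ ∂F + meanPairDist F
  have hK : 0 ≤ K := add_nonneg (mul_nonneg zero_le_two (integral_nonneg fun _ => norm_nonneg _))
    meanPairDist_nonneg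
  have hd (a b : E) : |doubleCenteredDist F a b| ≤ (K + 1) * ((‖a‖ + 1) * (‖b‖ + 1)) :=
    (abs_doubleCenteredDist_le h1 a b).trans <| by
      nlinarith [norm_nonneg a, norm_nonneg b, mul_nonneg (norm_nonneg a) (norm_nonneg b),
        mul_nonneg hK (add_nonneg (norm_nonneg a) (norm_nonneg b)),
        mul_nonneg hK (mul_nonneg (norm_nonneg a) (norm_nonneg b))]
  have hbound : Integrable (fun z : (E × E) × E =>
      (K + 1) ^ 4 * (‖z.1.1‖ + 1) ^ 4 * (‖z.1.2‖ + 1) ^ 3 * (‖z.2‖ + 1) ^ 1) ((F.prod F).prod F) :=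
    (((integrable_norm_add_one_pow h4 le_rfl).const_mul _).mul_prod
      (integrable_norm_add_one_pow h4 (by norm_num))).mul_prod
      (integrable_norm_add_one_pow h4 (by norm_num))
  have hmeas := measurable_doubleCenteredDist (F := F)
  refine hbound.mono' (((hmeas.comp (measurable_fst.snd.prodMk measurable_fst.fst)).pow_const 3).mul
    (hmeas.comp (measurable_snd.prodMk measurable_fst.fst))).aestronglyMeasurable
    (ae_of_all _ fun ⟨⟨x, x₁⟩, x₂⟩ => ?_)
  rw [Real.norm_eq_abs, abs_mul, abs_pow]
  calc |doubleCenteredDist F x₁ x| ^ 3 * |doubleCenteredDist F x₂ x|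
      ≤ ((K + 1) * ((‖x₁‖ + 1) * (‖x‖ + 1))) ^ 3 * ((K + 1) * ((‖x₂‖ + 1) * (‖x‖ + 1))) :=
        mul_le_mul (pow_le_pow_left₀ (abs_nonneg _) (hd x₁ x) 3) (hd x₂ x) (abs_nonneg _)
          (pow_nonneg ((abs_nonneg _).trans (hd x₁ x)) 3)
    _ = (K + 1) ^ 4 * (‖x‖ + 1) ^ 4 * (‖x₁‖ + 1) ^ 3 * (‖x₂‖ + 1) ^ 1 := by ring

theorem integral_doubleCenteredDist_pow_three_mul [IsProbabilityMeasure F]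
    (h4 : Integrable (fun x : E => ‖x‖ ^ 4) F) :
    ∫ z : (E × E) × E, doubleCenteredDist F z.1.2 z.1.1 ^ 3 * doubleCenteredDist F z.2 z.1.1
      ∂((F.prod F).prod F) = 0 := by
  rw [integral_prod _ (integrable_doubleCenteredDist_pow_three_mul h4)]
  simp only [integral_const_mul,
    integral_doubleCenteredDist_left (integrable_norm_of_integrable_norm_pow h4 (by norm_num)),
    mul_zero, integral_zero]

end DoubleCentered

/-- If `E‖X‖⁴ < ∞`, then for independent `X, X₁, X₂` with
distribution `F`, the double centered distance satisfies `E[d³(X₁,X) · d(X₂,X)] = 0`. -/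
theorem gini_double_centered_cube_orthogonal
    {Ω : Type*} [MeasurableSpace Ω] (μ : Measure Ω) [IsProbabilityMeasure μ]
    (p : ℕ) (F : Measure (EuclideanSpace ℝ (Fin p))) [IsProbabilityMeasure F]
    (X X₁ X₂ : Ω → EuclideanSpace ℝ (Fin p))
    (hX : Measurable X) (hX₁ : Measurable X₁) (hX₂ : Measurable X₂)
    (hXF : μ.map X = F) (hX₁F : μ.map X₁ = F) (hX₂F : μ.map X₂ = F)
    (hindep : iIndepFun ![X, X₁, X₂] μ)
    (hmom : Integrable (fun x => ‖x‖ ^ 4) F)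
    (Δ : ℝ) (hΔ : Δ = ∫ x, ∫ y, ‖x - y‖ ∂F ∂F)
    (g : EuclideanSpace ℝ (Fin p) → ℝ) (hg : ∀ x, g x = ∫ y, ‖y - x‖ ∂F)
    (d : EuclideanSpace ℝ (Fin p) → EuclideanSpace ℝ (Fin p) → ℝ)
    (hd : ∀ x₁ x₂, d x₁ x₂ = ‖x₁ - x₂‖ - g x₁ - g x₂ + Δ) :
    ∫ ω, d (X₁ ω) (X ω) ^ 3 * d (X₂ ω) (X ω) ∂μ = 0 := by
  obtain rfl : g = meanDist F := funext hg
  subst hΔ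
  obtain rfl : d = doubleCenteredDist F := funext₂ hd
  have hlaw := hindep.map_prodMk_prodMk_eq_prod_map_map_map hX hX₁ hX₂
  rw [hXF, hX₁F, hX₂F] at hlaw
  rw [← integral_doubleCenteredDist_pow_three_mul hmom, ← hlaw,
    integral_map ((hX.prodMk hX₁).prodMk hX₂).aemeasurable
      (hlaw ▸ (integrable_doubleCenteredDist_pow_three_mul hmom).aestronglyMeasurable)]
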